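/- arXiv:2304.13564 — 2 statements merged into one kernel-verified Lean document; each statement's English description precedes it below -/
import Mathlib

section
/- Let n ≥ 1 and let k be an odd integer with 1 ≤ k ≤ 2n. Let S be a connected subset of the space of 2n×2n real matrices (with its standard topology) such that every g ∈ S satisfies gᵀJg = J and p_k(g) ≠ 0. Then for every g ∈ S, the inverse matrix g⁻¹ does not belong to S. -/
open Matrix

/-- The standard symplectic matrix: the (2n+1−i, i) entry (1-based) is (−1)^i,
all other entries are 0. -/
def Jmat (n : ℕ) : Matrix (Fin (2*n)) (Fin (2*n)) ℝ :=
  Matrix.of fun i j => if (i:ℕ) + (j:ℕ) = 2*n - 1 then (-1 : ℝ)^((j:ℕ)+1) else 0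

/-- The antiprincipal k×k minor `p_k(g)`. -/
def pMinor (n k : ℕ) (g : Matrix (Fin (2*n)) (Fin (2*n)) ℝ) : ℝ :=
  Matrix.det (Matrix.of fun i j : Fin k =>
    if h : (i:ℕ) < 2*n then
      g ⟨(i:ℕ), h⟩ ⟨2*n - 1 - (j:ℕ), by omega⟩
    else 0)

lemma Jmat_mul_self (n : ℕ) : Jmat n * Jmat n = -1 := by
  ext i j
  have hi : (i:ℕ) < 2*n := i.2
  have hj : (j:ℕ) < 2*n := j.2
  rw [Matrix.mul_apply]
  rw [Finset.sum_eq_single (⟨2*n-1-(i:ℕ), by omega⟩ : Fin (2*n))]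
  · simp only [Jmat, Matrix.of_apply]
    rw [if_pos (by omega)]
    by_cases h : i = j
    · subst h
      rw [if_pos (by omega)]
      rw [← pow_add]
      have he : (2*n-1-(i:ℕ)+1) + ((i:ℕ)+1) = 2*n+1 := by omega
      rw [he, Odd.neg_one_pow ⟨n, by ring⟩]
      simp [Matrix.one_apply]
    · rw [if_neg (by omega)]
      simp [Matrix.one_apply, h]
  · intro b _ hb
    simp only [Jmat, Matrix.of_apply]
    rw [if_neg]
    · ring
    · intro hc
      apply hb
      apply Fin.ext
      simp
      omega
  · intro hmem
    exact absurd (Finset.mem_univ _) hmem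

lemma neg_one_pow_congr' {a b : ℕ} (h : a % 2 = b % 2) : (-1:ℝ)^a = (-1:ℝ)^b := by
  rcases Nat.even_or_odd a with ha | ha
  · rw [Even.neg_one_pow ha, Even.neg_one_pow (Nat.even_iff.mpr (by rw [← h]; exact Nat.even_iff.mp ha))]
  · rw [Odd.neg_one_pow ha, Odd.neg_one_pow (Nat.odd_iff.mpr (by rw [← h]; exact Nat.odd_iff.mp ha))]

lemma inv_symplectic (n : ℕ) (g : Matrix (Fin (2*n)) (Fin (2*n)) ℝ)
    (hg : gᵀ * Jmat n * g = Jmat n) : g⁻¹ = -(Jmat n) * gᵀ * Jmat n := by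
  apply Matrix.inv_eq_left_inv
  calc -(Jmat n) * gᵀ * Jmat n * g = -(Jmat n) * (gᵀ * Jmat n * g) := by
        noncomm_ring
    _ = -(Jmat n * Jmat n) := by rw [hg]; noncomm_ring
    _ = 1 := by rw [Jmat_mul_self]; simp

lemma inv_apply' (n : ℕ) (g : Matrix (Fin (2*n)) (Fin (2*n)) ℝ)
    (hg : gᵀ * Jmat n * g = Jmat n) (i j : Fin (2*n)) :
    g⁻¹ i j = (-1:ℝ)^((i:ℕ)+(j:ℕ)) *
      g ⟨2*n-1-(j:ℕ), by omega⟩ ⟨2*n-1-(i:ℕ), by omega⟩ := by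
  have hi : (i:ℕ) < 2*n := i.2
  have hj : (j:ℕ) < 2*n := j.2
  rw [inv_symplectic n g hg]
  rw [Matrix.mul_apply]
  rw [Finset.sum_eq_single (⟨2*n-1-(j:ℕ), by omega⟩ : Fin (2*n))]
  · rw [Matrix.mul_apply]
    rw [Finset.sum_eq_single (⟨2*n-1-(i:ℕ), by omega⟩ : Fin (2*n))]
    · simp only [Jmat, Matrix.neg_apply, Matrix.of_apply, Matrix.transpose_apply,
        Fin.val_mk ]
      rw [if_pos (by omega), if_pos (by omega)]
      have h1 : -(-1:ℝ)^(2*n-1-(i:ℕ)+1) * (-1:ℝ)^((j:ℕ)+1) = (-1:ℝ)^((i:ℕ)+(j:ℕ)) := by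
        rw [neg_mul, ← pow_add,
          show -((-1:ℝ)^(2*n-1-(i:ℕ)+1+((j:ℕ)+1))) = (-1:ℝ)^(2*n-1-(i:ℕ)+1+((j:ℕ)+1)+1) by
            rw [pow_succ]; ring]
        exact neg_one_pow_congr' (by omega)
      rw [← h1]; ring
    · intro b _ hb
      simp only [Jmat, Matrix.neg_apply, Matrix.of_apply]
      rw [if_neg (fun hc => hb (Fin.ext (show (b:ℕ) = 2*n-1-(i:ℕ) by
        have := hc; omega)))]
      ring
    · intro hmem; exact absurd (Finset.mem_univ _) hmem
  · intro b _ hb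
    simp only [Jmat, Matrix.of_apply]
    rw [if_neg (fun hc => hb (Fin.ext (show (b:ℕ) = 2*n-1-(j:ℕ) by
      have := hc; omega)))]
    ring
  · intro hmem; exact absurd (Finset.mem_univ _) hmem

lemma det_flip {k : ℕ} (hodd : Odd k) (B M : Matrix (Fin k) (Fin k) ℝ)
    (h : ∀ i j, M i j = (-1:ℝ)^((i:ℕ)+(j:ℕ)+1) * B j i) :
    M.det = - B.det := by
  have hM : M = Matrix.diagonal (fun i : Fin k => (-1:ℝ)^((i:ℕ)+1)) * Bᵀ *
      Matrix.diagonal (fun j : Fin k => (-1:ℝ)^((j:ℕ))) := by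
    ext i j
    rw [Matrix.mul_diagonal, Matrix.diagonal_mul, Matrix.transpose_apply, h i j,
      show (i:ℕ)+(j:ℕ)+1 = ((i:ℕ)+1)+(j:ℕ) by omega, pow_add]
    ring
  rw [hM, Matrix.det_mul, Matrix.det_mul, Matrix.det_diagonal, Matrix.det_diagonal,
    Matrix.det_transpose]
  have hp : (∏ i : Fin k, (-1:ℝ)^((i:ℕ)+1)) * (∏ j : Fin k, (-1:ℝ)^((j:ℕ))) = -1 := by
    rw [← Finset.prod_mul_distrib]
    have h1 : ∀ i : Fin k, (-1:ℝ)^((i:ℕ)+1) * (-1:ℝ)^((i:ℕ)) = -1 := fun i => by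
      rw [← pow_add]
      exact Odd.neg_one_pow ⟨(i:ℕ), by ring⟩
    rw [Finset.prod_congr rfl (fun i _ => h1 i), Finset.prod_const,
      Finset.card_univ, Fintype.card_fin]
    exact Odd.neg_one_pow hodd
  linear_combination Matrix.det B * hp

lemma pMinor_inv (n k : ℕ) (hk2 : k ≤ 2*n) (hodd : Odd k)
    (g : Matrix (Fin (2*n)) (Fin (2*n)) ℝ)
    (hg : gᵀ * Jmat n * g = Jmat n) :
    pMinor n k g⁻¹ = - pMinor n k g := by
  unfold pMinor
  apply det_flip hodd
  intro i j
  have hik : (i:ℕ) < 2*n := lt_of_lt_of_le i.2 hk2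
  have hjk : (j:ℕ) < 2*n := lt_of_lt_of_le j.2 hk2
  simp only [Matrix.of_apply, dif_pos hik, dif_pos hjk]
  rw [inv_apply' n g hg]
  simp only [Fin.val_mk]
  have e1 : 2*n-1-(2*n-1-(j:ℕ)) = (j:ℕ) := by omega
  simp only [e1]
  rw [neg_one_pow_congr' (show ((i:ℕ) + (2*n-1-(j:ℕ))) % 2 = ((i:ℕ)+(j:ℕ)+1) % 2 by omega)]

lemma pMinor_continuous (n k : ℕ) : Continuous (pMinor n k) := by
  apply Continuous.matrix_det
  apply continuous_matrix
  intro i j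
  simp only [Matrix.of_apply]
  by_cases h : (i:ℕ) < 2*n
  · simp only [dif_pos h]
    exact (continuous_apply _).comp (continuous_apply _)
  · simp only [dif_neg h]
    exact continuous_const

/-- If `k` is odd and `S` is a connected set of symplectic matrices with nonvanishing
`k`-th antiprincipal minor, then `S` contains no matrix together with its inverse. -/
theorem inverse_not_in_connected_symplectic_set (n : ℕ) (hn : 1 ≤ n)
    (k : ℕ) (hodd : Odd k) (hk1 : 1 ≤ k) (hk2 : k ≤ 2*n)
    (S : Set (Matrix (Fin (2*n)) (Fin (2*n)) ℝ)) (hconn : IsConnected S)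
    (hS : ∀ g ∈ S, gᵀ * Jmat n * g = Jmat n ∧ pMinor n k g ≠ 0) :
    ∀ g ∈ S, g⁻¹ ∉ S := by
  intro g hg hginv
  have hP : IsPreconnected (pMinor n k '' S) :=
    hconn.isPreconnected.image _ (pMinor_continuous n k).continuousOn
  have h0 : (0:ℝ) ∉ pMinor n k '' S := by
    rintro ⟨x, hx, hx0⟩
    exact (hS x hx).2 hx0
  have hneg : pMinor n k g⁻¹ = - pMinor n k g :=
    pMinor_inv n k hk2 hodd g (hS g hg).1
  have h1 : pMinor n k g ∈ pMinor n k '' S := ⟨g, hg, rfl⟩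
  have h2 : - pMinor n k g ∈ pMinor n k '' S := by
    rw [← hneg]; exact ⟨g⁻¹, hginv, rfl⟩
  have hne : pMinor n k g ≠ 0 := (hS g hg).2
  rcases lt_or_gt_of_ne hne with hlt | hgt
  · exact h0 (hP.Icc_subset h1 h2 ⟨le_of_lt hlt, by linarith⟩)
  · exact h0 (hP.Icc_subset h2 h1 ⟨by linarith, le_of_lt hgt⟩)
end

section
/- Let n ≥ 2 be even and let α, β ∈ ℝ. Set M = exp(αX + βY). Then the top-right 2×2 block of M is symmetric and traceless; explicitly, M_{1,2n−1} + M_{2,2n} = 0 and M_{1,2n} = M_{2,2n−1} (indices 1-based). -/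
open Matrix

noncomputable section

def I2 : Matrix (Fin 2) (Fin 2) ℝ := !![1, 0; 0, 1]
def Tm : Matrix (Fin 2) (Fin 2) ℝ := !![1, 0; 0, -1]
def Rm : Matrix (Fin 2) (Fin 2) ℝ := !![0, -1; 1, 0]
def Pm : Matrix (Fin 2) (Fin 2) ℝ := !![0, 1; 1, 0]

/-- `c_k = √(k(n−k))`. -/
def cc (n k : ℕ) : ℝ := Real.sqrt (k * (n - k : ℕ))

/-- The 2n×2n matrix, viewed as an n×n array of 2×2 blocks, whose only nonzero blocks are
`B k` at superdiagonal block positions (k, k+1) for 1-based `k = 1,…,n−1`. -/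
def blkSup (n : ℕ) (B : ℕ → Matrix (Fin 2) (Fin 2) ℝ) :
    Matrix (Fin (2*n)) (Fin (2*n)) ℝ :=
  Matrix.of fun r c =>
    if (c:ℕ)/2 = (r:ℕ)/2 + 1 then
      B ((r:ℕ)/2 + 1) ⟨(r:ℕ) % 2, by omega⟩ ⟨(c:ℕ) % 2, by omega⟩
    else 0

/-- The matrix `X` (n even): superdiagonal blocks `c_k I₂` for `k < n/2`,
`c_{n/2} T` at `k = n/2`, and `−c_k I₂` for `k > n/2`. -/
def Xeven (n : ℕ) : Matrix (Fin (2*n)) (Fin (2*n)) ℝ :=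
  blkSup n (fun k =>
    if k < n/2 then cc n k • I2
    else if k = n/2 then cc n (n/2) • Tm
    else -(cc n k) • I2)

/-- The matrix `Y` (n even): superdiagonal blocks `c_k R` for `k ≠ n/2` and
`c_{n/2} P` at `k = n/2`. -/
def Yeven (n : ℕ) : Matrix (Fin (2*n)) (Fin (2*n)) ℝ :=
  blkSup n (fun k => if k = n/2 then cc n (n/2) • Pm else cc n k • Rm)

/-!
`αX + βY` is block-superdiagonal with blocks `B_k = α X_k + β Y_k`, so it is nilpotent and the
top-right block of its exponential is `B_1 ⋯ B_{n-1} / (n-1)!`. Every block `B_k` with `k ≠ n/2`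
has the form `a I₂ + b R` and commutes with `R`, while the middle block `c (α T + β P)`
anticommutes with `R`. Hence the product anticommutes with `R`, and a 2×2 matrix anticommuting
with `R` is symmetric and traceless.
-/

theorem NormedSpace.exp_eq_sum_range_of_pow_eq_zero (𝕂 : Type*) {𝔸 : Type*} [Field 𝕂]
    [CharZero 𝕂] [Ring 𝔸] [Algebra 𝕂 𝔸] [TopologicalSpace 𝔸] [IsTopologicalRing 𝔸]
    {x : 𝔸} {k : ℕ} (h : x ^ k = 0) :
    NormedSpace.exp x = ∑ m ∈ Finset.range k, (m.factorial : 𝕂)⁻¹ • x ^ m := by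
  rw [NormedSpace.exp_eq_tsum 𝕂]
  refine tsum_eq_sum fun m hm => ?_
  rw [pow_eq_zero_of_le (by simpa using hm) h, smul_zero]

theorem semiconjBy_list_prod_neg {R : Type*} [Ring R] {J s : R} {l₁ l₂ : List R}
    (h₁ : ∀ a ∈ l₁, Commute J a) (hs : SemiconjBy J s (-s))
    (h₂ : ∀ a ∈ l₂, Commute J a) :
    SemiconjBy J (l₁ ++ s :: l₂).prod (-(l₁ ++ s :: l₂).prod) := by
  have h := SemiconjBy.mul_right (SemiconjBy.mul_right (Commute.list_prod_right l₁ J h₁) hs)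
    (Commute.list_prod_right l₂ J h₂)
  simpa [List.prod_append, mul_assoc] using h

theorem List.range'_eq_append_cons {s m k : ℕ} (hsk : s ≤ k) (hkm : k < s + m) :
    List.range' s m = List.range' s (k - s) ++ k :: List.range' (k + 1) (s + m - k - 1) := by
  have h := List.range'_append (s := s) (m := k - s) (n := s + m - k) (step := 1)
  rw [show s + 1 * (k - s) = k by omega, show k - s + (s + m - k) = m by omega,
    show s + m - k = s + m - k - 1 + 1 by omega, List.range'_succ] at h
  exact h.symm

section BlockSuperdiagonal

variable (n : ℕ) (B : ℕ → Matrix (Fin 2) (Fin 2) ℝ)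

theorem blkSup_apply (r c : Fin (2 * n)) :
    blkSup n B r c =
      if (c : ℕ) / 2 = r / 2 + 1 then B (r / 2 + 1) (Fin.ofNat 2 r) (Fin.ofNat 2 c) else 0 :=
  rfl

theorem mul_blkSup_apply (A : Matrix (Fin (2 * n)) (Fin (2 * n)) ℝ) (r c : Fin (2 * n)) :
    (A * blkSup n B) r c =
      if h : 1 ≤ (c : ℕ) / 2 then
        ∑ i : Fin 2, A r ⟨2 * ((c : ℕ) / 2 - 1) + i, by omega⟩ * B (c / 2) i (Fin.ofNat 2 c)
      else 0 := by
  rw [mul_apply]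
  split_ifs with hc
  · symm
    refine Fintype.sum_of_injective
      (fun i : Fin 2 => (⟨2 * ((c : ℕ) / 2 - 1) + i, by omega⟩ : Fin (2 * n)))
      (fun i j hij => Fin.ext (by simpa using hij)) _ _ (fun j hj => ?_) (fun i => ?_)
    · rw [blkSup_apply, if_neg, mul_zero]
      intro hjc
      exact hj ⟨Fin.ofNat 2 j, Fin.ext (by simp only [Fin.val_ofNat]; omega)⟩
    · rw [blkSup_apply, if_pos (by dsimp only; omega)]
      congr 3
      · dsimp only; omega
      · ext; simp only [Fin.val_ofNat]; omega
  · refine Finset.sum_eq_zero fun j _ => ?_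
    rw [blkSup_apply, if_neg (by omega), mul_zero]

theorem blkSup_pow_apply (m : ℕ) (r c : Fin (2 * n)) :
    (blkSup n B ^ m) r c =
      if (c : ℕ) / 2 = r / 2 + m then
        ((List.range' (r / 2 + 1) m).map B).prod (Fin.ofNat 2 r) (Fin.ofNat 2 c)
      else 0 := by
  induction m generalizing c with
  | zero =>
    simp only [pow_zero, one_apply, add_zero, List.range'_zero, List.map_nil, List.prod_nil,
      ← ite_and]
    refine if_congr ?_ rfl rfl
    simp only [Fin.ext_iff, Fin.val_ofNat]
    omega
  | succ m ih =>
    rw [pow_succ, mul_blkSup_apply]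
    simp_rw [ih]
    by_cases hc : (c : ℕ) / 2 = r / 2 + (m + 1)
    · rw [dif_pos (by omega), if_pos hc, List.range'_concat, List.map_append, List.prod_append,
        List.map_singleton, List.prod_singleton, mul_apply]
      refine Finset.sum_congr rfl fun i _ => ?_
      rw [if_pos (by omega), show (c : ℕ) / 2 = r / 2 + 1 + 1 * m by omega,
        show Fin.ofNat 2 (2 * (r / 2 + 1 + 1 * m - 1) + i) = i from
          Fin.ext (by simp only [Fin.val_ofNat]; omega)]
    · rw [if_neg hc]
      split_ifs
      · exact Finset.sum_eq_zero fun i _ => by rw [if_neg (by omega), zero_mul]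
      · rfl

theorem blkSup_pow_eq_zero : blkSup n B ^ n = 0 := by
  ext r c
  rw [blkSup_pow_apply, if_neg (by omega), Matrix.zero_apply]

theorem exp_blkSup_apply_of_lt_of_div_eq (r c : Fin (2 * n)) (hr : (r : ℕ) < 2)
    (hc : (c : ℕ) / 2 = n - 1) :
    NormedSpace.exp (blkSup n B) r c =
      ((n - 1).factorial : ℝ)⁻¹ *
        ((List.range' 1 (n - 1)).map B).prod (Fin.ofNat 2 r) (Fin.ofNat 2 c) := by
  rw [NormedSpace.exp_eq_sum_range_of_pow_eq_zero ℝ (blkSup_pow_eq_zero n B), Matrix.sum_apply,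
    Finset.sum_eq_single (n - 1)]
  · rw [Matrix.smul_apply, blkSup_pow_apply, if_pos (by omega), smul_eq_mul, Nat.div_eq_of_lt hr]
  · intro m _ hm
    rw [Matrix.smul_apply, blkSup_pow_apply, if_neg (by omega), smul_zero]
  · intro h
    exact absurd (Finset.mem_range.mpr (by omega)) h

theorem smul_blkSup_add_smul_blkSup (a b : ℝ) (B' : ℕ → Matrix (Fin 2) (Fin 2) ℝ) :
    a • blkSup n B + b • blkSup n B' = blkSup n (a • B + b • B') := by
  ext r c
  rw [Matrix.add_apply, Matrix.smul_apply, Matrix.smul_apply, blkSup_apply, blkSup_apply,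
    blkSup_apply]
  split_ifs <;> simp

end BlockSuperdiagonal

def xBlock (n k : ℕ) : Matrix (Fin 2) (Fin 2) ℝ :=
  if k < n/2 then cc n k • I2
  else if k = n/2 then cc n (n/2) • Tm
  else -(cc n k) • I2

def yBlock (n k : ℕ) : Matrix (Fin 2) (Fin 2) ℝ :=
  if k = n/2 then cc n (n/2) • Pm else cc n k • Rm

theorem Xeven_eq_blkSup (n : ℕ) : Xeven n = blkSup n (xBlock n) := rfl

theorem Yeven_eq_blkSup (n : ℕ) : Yeven n = blkSup n (yBlock n) := rfl

theorem commute_Rm_smul_add_smul (a b : ℝ) : Commute Rm (a • I2 + b • Rm) := by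
  rw [show I2 = 1 by ext i j; fin_cases i <;> fin_cases j <;> rfl]
  exact ((Commute.one_right Rm).smul_right a).add_right ((Commute.refl Rm).smul_right b)

theorem semiconjBy_Rm_smul_add_smul (a b : ℝ) :
    SemiconjBy Rm (a • Tm + b • Pm) (-(a • Tm + b • Pm)) := by
  unfold SemiconjBy
  ext i j
  fin_cases i <;> fin_cases j <;> simp [Rm, Tm, Pm, mul_apply, Fin.sum_univ_two]

theorem apply_eq_of_semiconjBy_Rm_neg {S : Matrix (Fin 2) (Fin 2) ℝ}
    (h : SemiconjBy Rm S (-S)) : S 1 0 = S 0 1 ∧ S 1 1 = -S 0 0 := by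
  have h00 : -S 1 0 = -S 0 1 := by
    simpa [Rm, mul_apply, Fin.sum_univ_two] using congrFun (congrFun h 0) 0
  have h01 : -S 1 1 = S 0 0 := by
    simpa [Rm, mul_apply, Fin.sum_univ_two] using congrFun (congrFun h 0) 1
  exact ⟨neg_inj.mp h00, neg_eq_iff_eq_neg.mp h01⟩

theorem commute_Rm_block (n k : ℕ) (α β : ℝ) (hk : k ≠ n / 2) :
    Commute Rm ((α • xBlock n + β • yBlock n) k) := by
  simp only [Pi.add_apply, Pi.smul_apply, xBlock, yBlock, if_neg hk]
  split_ifs <;> simp only [smul_smul] <;> exact commute_Rm_smul_add_smul _ _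

theorem semiconjBy_Rm_middle_block (n : ℕ) (α β : ℝ) :
    SemiconjBy Rm ((α • xBlock n + β • yBlock n) (n / 2))
      (-(α • xBlock n + β • yBlock n) (n / 2)) := by
  simp only [Pi.add_apply, Pi.smul_apply, xBlock, yBlock, lt_irrefl, if_false, if_true, smul_smul]
  exact semiconjBy_Rm_smul_add_smul _ _

/-- For `n` even, the top-right 2×2 block of `exp(αX + βY)` is traceless and symmetric. -/
theorem top_right_block_traceless_symmetric (n : ℕ) (hn : 2 ≤ n)
    (α β : ℝ) (M : Matrix (Fin (2*n)) (Fin (2*n)) ℝ)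
    (hM : M = NormedSpace.exp (α • Xeven n + β • Yeven n)) :
    M ⟨0, by omega⟩ ⟨2*n - 2, by omega⟩ + M ⟨1, by omega⟩ ⟨2*n - 1, by omega⟩ = 0 ∧
    M ⟨0, by omega⟩ ⟨2*n - 1, by omega⟩ = M ⟨1, by omega⟩ ⟨2*n - 2, by omega⟩ := by
  set B := α • xBlock n + β • yBlock n
  have hS : SemiconjBy Rm ((List.range' 1 (n - 1)).map B).prod
      (-((List.range' 1 (n - 1)).map B).prod) := by
    rw [List.range'_eq_append_cons (k := n / 2) (by omega) (by omega), List.map_append,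
      List.map_cons]
    refine semiconjBy_list_prod_neg ?_ (semiconjBy_Rm_middle_block n α β) ?_ <;>
    · simp only [List.mem_map, List.mem_range'_1]
      rintro _ ⟨k, hk, rfl⟩
      exact commute_Rm_block n k α β (by omega)
  obtain ⟨h10, h11⟩ := apply_eq_of_semiconjBy_Rm_neg hS
  rw [Xeven_eq_blkSup, Yeven_eq_blkSup, smul_blkSup_add_smul_blkSup] at hM
  have hentry := hM ▸ exp_blkSup_apply_of_lt_of_div_eq n B
  have hodd : Fin.ofNat 2 (2 * n - 1) = 1 := Fin.ext (by simp only [Fin.val_ofNat]; omega)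
  have heven : Fin.ofNat 2 (2 * n - 2) = 0 := Fin.ext (by simp only [Fin.val_ofNat]; omega)
  simp (disch := simp <;> omega) only [hentry, hodd, heven, show Fin.ofNat 2 0 = 0 from rfl,
    show Fin.ofNat 2 1 = 1 from rfl, h10, h11, and_true]
  ring

end
end
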